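/- There is no chromatic simplicial map δ from the 3^N-fold subdivision of the equality negation input graph to the equality negation output graph that respects inputs (i.e., such that the composition with the projections commutes with the carrier map Δ). Equivalently, the equality negation task for two processes is unsolvable in the N-layer message-passing model for every N. -/

import Mathlib

/-!
Along the subdivision of an input edge the decision changes at every step when the two inputs
are equal and never otherwise. Since the subdivision has odd length `3 ^ N`, the decisions of
the original endpoints `(B, i)` and `(W, j)` agree exactly when `i ≠ j`. With three input
values this is impossible: `(B, 0)`, `(W, 2)`, `(B, 1)`, `(W, 0)` would all decide alike,
while `(B, 0)` and `(W, 0)` must disagree.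
-/

inductive Proc : Type where
  | B | W
deriving DecidableEq

/-- Vertices of the `m`-fold subdivision of the equality-negation input graph:
the original vertices `(p,i)` together with interior vertices of each subdivided
input edge `e = {(B,i),(W,j)}` at positions `0 < k < m`. -/
inductive SubV (m : ℕ) : Type where
  | orig : Proc → Fin 3 → SubV m
  | inner : Fin 3 × Fin 3 → ℕ → SubV m
deriving DecidableEq

/-- The `k`-th vertex (0 ≤ k ≤ m) on the subdivision of the input edge
`e = {(B, e.1), (W, e.2)}`: position `0` is the original `B`-endpoint, position `m`
the original `W`-endpoint. -/
def pvtx (m : ℕ) (e : Fin 3 × Fin 3) (k : ℕ) : SubV m :=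
  if k = 0 then .orig .B e.1 else if k = m then .orig .W e.2 else .inner e k

/-- Colors alternate along each subdivided edge, starting with `B` at position 0. -/
def scolor {m : ℕ} : SubV m → Proc
  | .orig p _ => p
  | .inner _ k => if Even k then .B else .W

/-- A subdivision vertex inherits the input value of the original endpoint of its color. -/
def sinput {m : ℕ} : SubV m → Fin 3
  | .orig _ i => i
  | .inner e k => if Even k then e.1 else e.2

lemma apply_eq_apply_zero_of_forall_eq_succ {α : Type*} {f : ℕ → α} {m : ℕ}
    (h : ∀ k < m, f k = f (k + 1)) : f m = f 0 := by
  induction m with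
  | zero => rfl
  | succ m ih => rw [← h m m.lt_succ_self, ih fun k hk => h k (hk.trans m.lt_succ_self)]

lemma apply_eq_apply_zero_iff_even_of_forall_ne_succ {f : ℕ → Fin 2} {m : ℕ}
    (h : ∀ k < m, f k ≠ f (k + 1)) : f m = f 0 ↔ Even m := by
  induction m with
  | zero => simp
  | succ m ih =>
    have other : ∀ a b c : Fin 2, a ≠ b → (b = c ↔ ¬ a = c) := by decide
    rw [other _ _ _ (h m m.lt_succ_self), ih fun k hk => h k (hk.trans m.lt_succ_self),
      Nat.even_add_one]

lemma pvtx_zero (m : ℕ) (e : Fin 3 × Fin 3) : pvtx m e 0 = .orig .B e.1 := by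
  simp [pvtx]

lemma pvtx_self {m : ℕ} (hm : m ≠ 0) (e : Fin 3 × Fin 3) : pvtx m e m = .orig .W e.2 := by
  simp [pvtx, hm]

lemma orig_decisions_eq_iff_ne {m : ℕ} (hm : Odd m) (d : SubV m → Fin 2)
    (hΔ : ∀ e : Fin 3 × Fin 3, ∀ k < m, (e.1 = e.2 ↔ d (pvtx m e k) ≠ d (pvtx m e (k + 1))))
    (e : Fin 3 × Fin 3) : d (.orig .B e.1) = d (.orig .W e.2) ↔ e.1 ≠ e.2 := by
  rw [← pvtx_zero m e, ← pvtx_self (Nat.ne_of_odd_add hm) e, eq_comm]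
  by_cases he : e.1 = e.2
  · have flips := apply_eq_apply_zero_iff_even_of_forall_ne_succ fun k hk => (hΔ e k hk).mp he
    rw [flips]
    simpa [he, Nat.not_even_iff_odd] using hm
  · have stays := apply_eq_apply_zero_of_forall_eq_succ fun k hk =>
      not_not.mp (mt (hΔ e k hk).mpr he)
    simpa [he] using stays

lemma Fin.three_not_forall_eq_iff_ne {α : Type*} (b w : Fin 3 → α) :
    ¬ ∀ i j, b i = w j ↔ i ≠ j := by
  intro h
  have h02 := (h 0 2).mpr (by decide)
  have h12 := (h 1 2).mpr (by decide)
  have h10 := (h 1 0).mpr (by decide)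
  exact (h 0 0).mp (h02.trans (h12.symm.trans h10)) rfl

/-- for every number of layers N, there is no color-preserving simplicial map δ
from the 3^N-fold subdivision of the equality-negation input graph to the output graph
(vertices Proc × {0,1}, all chromatic pairs being edges) that respects the carrier map Δ:
on every edge of the subdivision of an input edge e, the two decisions are distinct iff
the two inputs of e are equal.  Hence equality negation is unsolvable in the N-layer
message-passing model. -/
theorem eqneg_unsolvable_subdivision (N : ℕ) :
    ¬ ∃ δ : SubV (3 ^ N) → Proc × Fin 2,
      (∀ v, (δ v).1 = scolor v) ∧
      (∀ e : Fin 3 × Fin 3, ∀ k < 3 ^ N,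
        ((e.1 = e.2) ↔ (δ (pvtx (3 ^ N) e k)).2 ≠ (δ (pvtx (3 ^ N) e (k + 1))).2)) := by
  rintro ⟨δ, -, hΔ⟩
  have hodd : Odd (3 ^ N) := Odd.pow (by decide)
  exact Fin.three_not_forall_eq_iff_ne (fun i => (δ (.orig .B i)).2) (fun j => (δ (.orig .W j)).2)
    fun i j => orig_decisions_eq_iff_ne hodd (fun v => (δ v).2) hΔ (i, j)
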